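/- Let X and Y be Banach spaces over 𝕂 (= ℝ or ℂ), let E be an invariant sequence space over X, let Γ ⊆ (0, ∞] and let f : X → Y be non-contractive. Then the set C(E, f, Γ) = { (x_j)_{j=1}^∞ ∈ E : (f(x_j))_{j=1}^∞ ∉ ⋃_{q∈Γ} ℓ_q(Y) } is either empty or spaceable in E. -/

import Mathlib

open scoped Classical

/-- The zero-deleted sequence `x⁰`: if `x` has infinitely many nonzero coordinates, the
sequence of its nonzero coordinates in order; otherwise `0`. -/
noncomputable def zeroFree {X : Type*} [Zero X] (x : ℕ → X) : ℕ → X :=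
  if {j | x j ≠ 0}.Infinite then fun k => x (Nat.nth (fun j => x j ≠ 0) k) else 0

/-- An invariant sequence space over a Banach space `X` (Definition 1.1 of the paper):
an infinite-dimensional Banach space of `X`-valued sequences such that
(b1) for `x` with `x⁰ ≠ 0`, `x ∈ E ↔ x⁰ ∈ E` and `‖x‖ ≤ K‖x⁰‖`, and
(b2) `‖x j‖ ≤ ‖x‖` for every `x ∈ E` and every `j`.  Completeness and closedness are
expressed via the metric induced by the norm function. -/
structure InvariantSeqSpace (𝕂 : Type*) (X : Type*) [RCLike 𝕂]
    [NormedAddCommGroup X] [NormedSpace 𝕂 X] where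
  carrier : Submodule 𝕂 (ℕ → X)
  norm : (ℕ → X) → ℝ
  norm_nonneg : ∀ x ∈ carrier, 0 ≤ norm x
  norm_eq_zero_iff : ∀ x ∈ carrier, (norm x = 0 ↔ x = 0)
  norm_smul : ∀ (a : 𝕂), ∀ x ∈ carrier, norm (a • x) = ‖a‖ * norm x
  norm_add_le : ∀ x ∈ carrier, ∀ y ∈ carrier, norm (x + y) ≤ norm x + norm y
  complete : ∀ u : ℕ → ℕ → X, (∀ n, u n ∈ carrier) →
    (∀ ε : ℝ, 0 < ε → ∃ N, ∀ m ≥ N, ∀ n ≥ N, norm (u m - u n) < ε) →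
    ∃ x ∈ carrier, ∀ ε : ℝ, 0 < ε → ∃ N, ∀ n ≥ N, norm (u n - x) < ε
  infiniteDimensional : ¬ Module.Finite 𝕂 carrier
  K : ℝ
  K_pos : 0 < K
  mem_iff_zeroFree_mem : ∀ x : ℕ → X, zeroFree x ≠ 0 → (x ∈ carrier ↔ zeroFree x ∈ carrier)
  norm_le_K_mul : ∀ x : ℕ → X, zeroFree x ≠ 0 → x ∈ carrier → norm x ≤ K * norm (zeroFree x)
  coord_norm_le : ∀ x ∈ carrier, ∀ j : ℕ, ‖x j‖ ≤ norm x

/-- A strongly invariant sequence space: an invariant sequence space containing `c₀₀(X)`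
and such that a sequence belongs to the space iff all of its subsequences do. -/
structure StronglyInvariantSeqSpace (𝕂 : Type*) (X : Type*) [RCLike 𝕂]
    [NormedAddCommGroup X] [NormedSpace 𝕂 X] extends InvariantSeqSpace 𝕂 X where
  c00_subset : ∀ x : ℕ → X, {j | x j ≠ 0}.Finite → x ∈ carrier
  mem_iff_subseq : ∀ x : ℕ → X,
    x ∈ carrier ↔ ∀ n : ℕ → ℕ, StrictMono n → (fun k => x (n k)) ∈ carrier

/-- A subset `A` of an invariant sequence space `E` is spaceable if `A ∪ {0}` contains a
closed (w.r.t. the norm of `E`) infinite-dimensional linear subspace of `E`. -/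
def Spaceable {𝕂 X : Type*} [RCLike 𝕂] [NormedAddCommGroup X] [NormedSpace 𝕂 X]
    (E : InvariantSeqSpace 𝕂 X) (A : Set (ℕ → X)) : Prop :=
  ∃ V : Submodule 𝕂 (ℕ → X), V ≤ E.carrier ∧ ¬ Module.Finite 𝕂 V ∧
    (V : Set (ℕ → X)) ⊆ A ∪ {0} ∧
    ∀ u : ℕ → ℕ → X, (∀ n, u n ∈ V) → ∀ z ∈ E.carrier,
      (∀ ε : ℝ, 0 < ε → ∃ N, ∀ n ≥ N, E.norm (u n - z) < ε) → z ∈ V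

/-- `f : X → Y` is non-contractive: `f 0 = 0` and for every scalar `α ≠ 0` there is
`K(α) > 0` with `‖f(αx)‖ ≥ K(α)‖f(x)‖` for all `x`. -/
def NonContractive {𝕂 X Y : Type*} [RCLike 𝕂] [NormedAddCommGroup X] [NormedSpace 𝕂 X]
    [NormedAddCommGroup Y] [NormedSpace 𝕂 Y] (f : X → Y) : Prop :=
  f 0 = 0 ∧ ∀ a : 𝕂, a ≠ 0 → ∃ K : ℝ, 0 < K ∧ ∀ x : X, K * ‖f x‖ ≤ ‖f (a • x)‖

/-- Membership in `ℓ_q(Y)` for `0 < q ≤ ∞`: for `q < ∞`, `Σ ‖y_j‖^q < ∞`; for `q = ∞`,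
boundedness. -/
def MemLq {Y : Type*} [NormedAddCommGroup Y] (q : ENNReal) (y : ℕ → Y) : Prop :=
  if q = ⊤ then ∃ C : ℝ, ∀ j, ‖y j‖ ≤ C
  else Summable fun j => ‖y j‖ ^ q.toReal

/-!
Pick `x` in the set. Since `f 0 = 0` and every `ℓ_q` contains the finitely supported sequences,
`x` has infinitely many nonzero coordinates, and its zero-deleted version `v = x⁰` again lies in
the set. Split `ℕ` into the infinitely many infinite blocks `{Nat.pair i k | k ∈ ℕ}` and let `W`
consist of the sequences whose restriction to every block is a scalar multiple of `v`. Copies of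
`v` on distinct blocks lie in `E` by (b1) and are linearly independent; `E ∩ W` is closed because
convergence in `E` implies coordinatewise convergence by (b2); and a nonzero `z ∈ W` equals
`a • v` with `a ≠ 0` on some block, so non-contractivity keeps `f ∘ z` outside every `ℓ_q`.
If `Γ = ∅` the set is all of `E`.
-/

open Function Filter Topology

section MemLq

variable {Y : Type*} [NormedAddCommGroup Y] {q : ENNReal}

theorem memLq_of_finite_support (hq : 0 < q) {y : ℕ → Y} (h : {j | y j ≠ 0}.Finite) :
    MemLq q y := by
  by_cases hT : q = ⊤
  · rw [MemLq, if_pos hT]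
    refine ⟨∑ j ∈ h.toFinset, ‖y j‖, fun j => ?_⟩
    by_cases hj : y j = 0
    · rw [hj, norm_zero]
      exact Finset.sum_nonneg fun _ _ => norm_nonneg _
    · exact Finset.single_le_sum (f := fun j => ‖y j‖) (fun _ _ => norm_nonneg _)
        (h.mem_toFinset.2 hj)
  · rw [MemLq, if_neg hT]
    have ht : q.toReal ≠ 0 := (ENNReal.toReal_pos hq.ne' hT).ne'
    refine summable_of_hasFiniteSupport (h.subset fun j hj h0 => hj ?_)
    simp only [h0, norm_zero, Real.zero_rpow ht]

theorem memLq_of_memLq_comp (hq : 0 < q) {y : ℕ → Y} {i : ℕ → ℕ} (hi : Injective i)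
    (h0 : ∀ j ∉ Set.range i, y j = 0) (h : MemLq q (y ∘ i)) : MemLq q y := by
  by_cases hT : q = ⊤
  · rw [MemLq, if_pos hT] at h ⊢
    obtain ⟨C, hC⟩ := h
    refine ⟨max C 0, fun j => ?_⟩
    by_cases hj : j ∈ Set.range i
    · obtain ⟨k, rfl⟩ := hj
      exact le_max_of_le_left (hC k)
    · rw [h0 j hj, norm_zero]
      exact le_max_right _ _
  · rw [MemLq, if_neg hT] at h ⊢
    have ht : q.toReal ≠ 0 := (ENNReal.toReal_pos hq.ne' hT).ne'
    refine (hi.summable_iff fun j hj => ?_).1 h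
    rw [h0 j hj, norm_zero, Real.zero_rpow ht]

theorem MemLq.of_mul_norm_le_comp {Y' : Type*} [NormedAddCommGroup Y'] {y : ℕ → Y}
    {w : ℕ → Y'} {i : ℕ → ℕ} (hi : Injective i) {c : ℝ} (hc : 0 < c)
    (hle : ∀ k, c * ‖w k‖ ≤ ‖y (i k)‖) (h : MemLq q y) : MemLq q w := by
  have hw : ∀ k, ‖w k‖ ≤ c⁻¹ * ‖y (i k)‖ := fun k => (le_inv_mul_iff₀ hc).2 (hle k)
  by_cases hT : q = ⊤
  · rw [MemLq, if_pos hT] at h ⊢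
    obtain ⟨C, hC⟩ := h
    exact ⟨c⁻¹ * C, fun k => (hw k).trans (by gcongr; exact hC (i k))⟩
  · rw [MemLq, if_neg hT] at h ⊢
    refine Summable.of_nonneg_of_le (fun k => by positivity) (fun k => ?_)
      ((h.comp_injective hi).mul_left (c⁻¹ ^ q.toReal))
    calc ‖w k‖ ^ q.toReal ≤ (c⁻¹ * ‖y (i k)‖) ^ q.toReal := by gcongr; exact hw k
      _ = c⁻¹ ^ q.toReal * ‖y (i k)‖ ^ q.toReal := by
          rw [Real.mul_rpow (by positivity) (norm_nonneg _)]

end MemLq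

section ZeroFree

variable {X : Type*} [Zero X]

theorem zeroFree_of_infinite {x : ℕ → X} (h : {j | x j ≠ 0}.Infinite) :
    zeroFree x = x ∘ Nat.nth (fun j => x j ≠ 0) :=
  if_pos h

theorem zeroFree_ne_zero_of_infinite {x : ℕ → X} (h : {j | x j ≠ 0}.Infinite) (k : ℕ) :
    zeroFree x k ≠ 0 := by
  rw [zeroFree_of_infinite h]
  exact Nat.nth_mem_of_infinite h k

theorem zeroFree_extend {e : ℕ → ℕ} (he : StrictMono e) {v : ℕ → X} (hv : ∀ k, v k ≠ 0) :
    zeroFree (extend e v 0) = v := by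
  have hsupp : {j | extend e v 0 j ≠ 0} = Set.range e := by
    ext j
    by_cases hj : ∃ k, e k = j
    · obtain ⟨k, rfl⟩ := hj
      simpa [he.injective.extend_apply] using hv k
    · simpa [extend_apply' _ _ _ hj] using hj
  have hinf : {j | extend e v 0 j ≠ 0}.Infinite :=
    hsupp ▸ Set.infinite_range_of_injective he.injective
  have hnth : Nat.nth (fun j => extend e v 0 j ≠ 0) = e :=
    ((Nat.nth_strictMono hinf).range_inj he).1 (by rw [Nat.range_nth_of_infinite hinf, hsupp])
  rw [zeroFree_of_infinite hinf, hnth]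
  exact extend_comp he.injective v 0

end ZeroFree

namespace InvariantSeqSpace

variable {𝕂 X : Type*} [RCLike 𝕂] [NormedAddCommGroup X] [NormedSpace 𝕂 X]
  (E : InvariantSeqSpace 𝕂 X)

theorem zeroFree_mem {x : ℕ → X} (hx : x ∈ E.carrier) (h : {j | x j ≠ 0}.Infinite) :
    zeroFree x ∈ E.carrier :=
  (E.mem_iff_zeroFree_mem x fun h0 => zeroFree_ne_zero_of_infinite h 0 (congrFun h0 0)).1 hx

theorem extend_mem {e : ℕ → ℕ} (he : StrictMono e) {v : ℕ → X} (hv : ∀ k, v k ≠ 0)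
    (hvE : v ∈ E.carrier) : extend e v 0 ∈ E.carrier := by
  have hne : zeroFree (extend e v 0) ≠ 0 := fun h0 => hv 0 (by
    rw [← zeroFree_extend he hv, h0, Pi.zero_apply])
  rwa [E.mem_iff_zeroFree_mem _ hne, zeroFree_extend he hv]

theorem tendsto_of_norm_sub_lt {u : ℕ → ℕ → X} {z : ℕ → X} (hu : ∀ n, u n ∈ E.carrier)
    (hz : z ∈ E.carrier) (h : ∀ ε : ℝ, 0 < ε → ∃ N, ∀ n ≥ N, E.norm (u n - z) < ε) :
    Tendsto u atTop (𝓝 z) := by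
  refine tendsto_pi_nhds.2 fun j => Metric.tendsto_atTop.2 fun ε hε => ?_
  obtain ⟨N, hN⟩ := h ε hε
  refine ⟨N, fun n hn => ?_⟩
  calc dist (u n j) (z j) = ‖(u n - z) j‖ := dist_eq_norm _ _
    _ ≤ E.norm (u n - z) := E.coord_norm_le _ (E.carrier.sub_mem (hu n) hz) j
    _ < ε := hN n hn

theorem spaceable_of_isClosed {A : Set (ℕ → X)} (W : Submodule 𝕂 (ℕ → X))
    (hW : IsClosed (W : Set (ℕ → X))) (hfin : ¬ Module.Finite 𝕂 ↥(E.carrier ⊓ W))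
    (hA : ((E.carrier ⊓ W : Submodule 𝕂 (ℕ → X)) : Set (ℕ → X)) ⊆ A ∪ {0}) :
    Spaceable E A :=
  ⟨E.carrier ⊓ W, inf_le_left, hfin, hA, fun _ hu _ hz h =>
    ⟨hz, hW.mem_of_tendsto (E.tendsto_of_norm_sub_lt (fun n => (hu n).1) hz h)
      (Eventually.of_forall fun n => (hu n).2)⟩⟩

end InvariantSeqSpace

theorem Nat.strictMono_pair (i : ℕ) : StrictMono (Nat.pair i) :=
  fun _ _ => Nat.pair_lt_pair_right i

section BlockwiseSpan

variable (𝕂 : Type*) {X : Type*} [RCLike 𝕂] [NormedAddCommGroup X] [NormedSpace 𝕂 X]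

def blockwiseSpan (v : ℕ → X) : Submodule 𝕂 (ℕ → X) :=
  ⨅ i, (𝕂 ∙ v).comap (LinearMap.funLeft 𝕂 X (Nat.pair i))

variable {𝕂} {v : ℕ → X}

theorem mem_blockwiseSpan {z : ℕ → X} :
    z ∈ blockwiseSpan 𝕂 v ↔ ∀ i, ∃ a : 𝕂, a • v = z ∘ Nat.pair i := by
  simp only [blockwiseSpan, Submodule.mem_iInf, Submodule.mem_comap,
    Submodule.mem_span_singleton]
  rfl

theorem isClosed_blockwiseSpan (v : ℕ → X) : IsClosed (blockwiseSpan 𝕂 v : Set (ℕ → X)) := by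
  rw [blockwiseSpan, Submodule.coe_iInf]
  refine isClosed_iInter fun i => (Submodule.closed_of_finiteDimensional (𝕂 ∙ v)).preimage ?_
  exact (continuous_pi fun k => continuous_apply (Nat.pair i k) :
    Continuous (LinearMap.funLeft 𝕂 X (Nat.pair i)))

theorem extend_pair_apply_pair (i i' k : ℕ) :
    extend (Nat.pair i) v 0 (Nat.pair i' k) = if i' = i then v k else 0 := by
  split_ifs with h
  · exact h ▸ (Nat.strictMono_pair i').injective.extend_apply v 0 k
  · exact extend_apply' _ _ _ fun ⟨_, hk⟩ => h (Nat.pair_eq_pair.1 hk).1.symm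

theorem extend_pair_mem_blockwiseSpan (i : ℕ) : extend (Nat.pair i) v 0 ∈ blockwiseSpan 𝕂 v :=
  mem_blockwiseSpan.2 fun i' => ⟨if i' = i then 1 else 0, funext fun k => by
    split_ifs <;> simp [extend_pair_apply_pair, *]⟩

theorem linearIndependent_extend_pair (hv : v 0 ≠ 0) :
    LinearIndependent 𝕂 fun i => extend (Nat.pair i) v 0 := by
  rw [linearIndependent_iff']
  intro s g hsum i hi
  have hcoord := congrFun hsum (Nat.pair i 0)
  simp only [Finset.sum_apply, Pi.smul_apply, Pi.zero_apply, extend_pair_apply_pair,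
    smul_ite, smul_zero, Finset.sum_ite_eq, if_pos hi] at hcoord
  exact (smul_eq_zero.1 hcoord).resolve_right hv

end BlockwiseSpan

theorem InvariantSeqSpace.not_finite_inf_blockwiseSpan {𝕂 X : Type*} [RCLike 𝕂]
    [NormedAddCommGroup X] [NormedSpace 𝕂 X] (E : InvariantSeqSpace 𝕂 X) {v : ℕ → X}
    (hv : ∀ k, v k ≠ 0) (hvE : v ∈ E.carrier) :
    ¬ Module.Finite 𝕂 ↥(E.carrier ⊓ blockwiseSpan 𝕂 v) := by
  intro _
  let b : ℕ → ↥(E.carrier ⊓ blockwiseSpan 𝕂 v) := fun i =>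
    ⟨extend (Nat.pair i) v 0, E.extend_mem (Nat.strictMono_pair i) hv hvE,
      extend_pair_mem_blockwiseSpan i⟩
  exact Module.Finite.not_linearIndependent_of_infinite b
    (LinearIndependent.of_comp (Submodule.subtype _) (linearIndependent_extend_pair (hv 0)))

section NotMemLq

variable {X Y : Type*} [NormedAddCommGroup Y] {q : ENNReal}

theorem infinite_support_of_not_memLq [Zero X] {f : X → Y} (hf0 : f 0 = 0) (hq : 0 < q)
    {x : ℕ → X} (h : ¬ MemLq q fun j => f (x j)) : {j | x j ≠ 0}.Infinite := fun hfin =>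
  h (memLq_of_finite_support hq (hfin.subset fun j hj hx => hj (by rw [hx, hf0])))

theorem not_memLq_comp_zeroFree [Zero X] {f : X → Y} (hf0 : f 0 = 0) (hq : 0 < q)
    {x : ℕ → X} (hx : {j | x j ≠ 0}.Infinite) (h : ¬ MemLq q fun j => f (x j)) :
    ¬ MemLq q fun k => f (zeroFree x k) := by
  refine fun hmem => h (memLq_of_memLq_comp hq (Nat.nth_injective hx) (fun j hj => ?_) ?_)
  · rw [Nat.range_nth_of_infinite hx, Set.mem_ofPred_eq, not_not] at hj
    rw [hj, hf0]
  · rwa [zeroFree_of_infinite hx] at hmem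

theorem not_memLq_of_mem_blockwiseSpan {𝕂 : Type*} [RCLike 𝕂] [NormedAddCommGroup X]
    [NormedSpace 𝕂 X] [NormedSpace 𝕂 Y] {f : X → Y} (hf : NonContractive (𝕂 := 𝕂) f)
    {v z : ℕ → X} (hz : z ∈ blockwiseSpan 𝕂 v) (hz0 : z ≠ 0)
    (hv : ¬ MemLq q fun k => f (v k)) : ¬ MemLq q fun j => f (z j) := by
  obtain ⟨j, hj⟩ := Function.ne_iff.1 hz0
  obtain ⟨i, k, rfl⟩ : ∃ i k, Nat.pair i k = j := ⟨_, _, Nat.pair_unpair j⟩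
  obtain ⟨a, ha⟩ := mem_blockwiseSpan.1 hz i
  have ha0 : a ≠ 0 := by
    rintro rfl
    exact hj (by simpa using (congrFun ha k).symm)
  obtain ⟨c, hc, hfc⟩ := hf.2 a ha0
  refine fun hmem => hv (hmem.of_mul_norm_le_comp (Nat.strictMono_pair i).injective hc fun m => ?_)
  rw [← comp_apply (f := z), ← ha]
  exact hfc (v m)

end NotMemLq

theorem spaceability_of_C_general {𝕂 X Y : Type*} [RCLike 𝕂]
    [NormedAddCommGroup X] [NormedSpace 𝕂 X]
    [NormedAddCommGroup Y] [NormedSpace 𝕂 Y]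
    (E : InvariantSeqSpace 𝕂 X) (Γ : Set ENNReal) (hΓ : ∀ q ∈ Γ, 0 < q)
    (f : X → Y) (hf : NonContractive (𝕂 := 𝕂) f) :
    {x : ℕ → X | x ∈ E.carrier ∧ ∀ q ∈ Γ, ¬ MemLq q fun j => f (x j)} = ∅ ∨
      Spaceable E {x : ℕ → X | x ∈ E.carrier ∧ ∀ q ∈ Γ, ¬ MemLq q fun j => f (x j)} := by
  rcases Γ.eq_empty_or_nonempty with rfl | ⟨q₀, hq₀⟩
  · refine Or.inr (E.spaceable_of_isClosed ⊤ isClosed_univ ?_ fun z hz => Or.inl ⟨hz.1, by simp⟩)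
    rw [inf_top_eq]
    exact E.infiniteDimensional
  refine (Set.eq_empty_or_nonempty _).imp id fun ⟨x, hxE, hx⟩ => ?_
  have hsupp := infinite_support_of_not_memLq hf.1 (hΓ q₀ hq₀) (hx q₀ hq₀)
  have hv : ∀ k, zeroFree x k ≠ 0 := zeroFree_ne_zero_of_infinite hsupp
  refine E.spaceable_of_isClosed _ (isClosed_blockwiseSpan (zeroFree x))
    (E.not_finite_inf_blockwiseSpan hv (E.zeroFree_mem hxE hsupp)) fun z ⟨hzE, hz⟩ => ?_
  by_cases hz0 : z = 0
  · exact Or.inr hz0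
  exact Or.inl ⟨hzE, fun q hq => not_memLq_of_mem_blockwiseSpan hf hz hz0
    (not_memLq_comp_zeroFree hf.1 (hΓ q hq) hsupp (hx q hq))⟩

/-- **Theorem 1.4(a), first part (Botelho–Fávaro).**  If `f` is non-contractive and
`Γ ⊆ (0, ∞]`, then `C(E, f, Γ) = {(x_j) ∈ E : (f(x_j)) ∉ ⋃_{q ∈ Γ} ℓ_q(Y)}` is either
empty or spaceable in `E`. -/
theorem spaceability_of_C {𝕂 X Y : Type*} [RCLike 𝕂]
    [NormedAddCommGroup X] [NormedSpace 𝕂 X] [CompleteSpace X]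
    [NormedAddCommGroup Y] [NormedSpace 𝕂 Y] [CompleteSpace Y]
    (E : InvariantSeqSpace 𝕂 X) (Γ : Set ENNReal) (hΓ : ∀ q ∈ Γ, 0 < q)
    (f : X → Y) (hf : NonContractive (𝕂 := 𝕂) f) :
    {x : ℕ → X | x ∈ E.carrier ∧ ∀ q ∈ Γ, ¬ MemLq q fun j => f (x j)} = ∅ ∨
      Spaceable E {x : ℕ → X | x ∈ E.carrier ∧ ∀ q ∈ Γ, ¬ MemLq q fun j => f (x j)} :=
  spaceability_of_C_general E Γ hΓ f hf
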